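/- For every real polynomial p, every real polynomial a, and every integer l ≥ 0, the row vector with entries ((a·p^{(l)})_0, (a·p^{(l)})_1) equals Σ_{k=0}^{l} (p_0^{(k)}, p_1^{(k)})·C_{k,l}, where C_{k,l} is built from a. -/
import Mathlib


open Polynomial
open Finset

/-- The splitting operator `R_{N,m}`: the coefficient of `x^n` in `RNm N m p`
is the coefficient of `x^{nN+m}` in `p`. -/
noncomputable def RNm (N m : ℕ) (p : ℝ[X]) : ℝ[X] :=
  ∑ n ∈ Finset.range (p.natDegree + 1), C (p.coeff (n * N + m)) * X ^ n

/-- The polynomial `b_{k,l}(x)` from the paper, `0` unless `⌈l/2⌉ ≤ k ≤ l`. -/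
noncomputable def bkl (k l : ℕ) : ℝ[X] :=
  if (l + 1) / 2 ≤ k ∧ k ≤ l then
    C (((-1 : ℝ) ^ k / (k.factorial : ℝ)) *
        ∑ j ∈ Finset.Icc ((l + 1) / 2) k,
          (-1 : ℝ) ^ j * (k.choose j : ℝ) * ∏ t ∈ Finset.range l, ((2 * j : ℝ) - (t : ℝ)))
      * X ^ (2 * k - l)
  else 0

/-- The `2×2` polynomial matrix `C_{k,l}` built from a polynomial `a`. -/
noncomputable def Ckl (k l : ℕ) (a : ℝ[X]) : Matrix (Fin 2) (Fin 2) ℝ[X] :=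
  (Matrix.of ![![RNm 2 0 (bkl k l), RNm 2 1 (bkl k l)],
      ![X * RNm 2 1 (bkl k l) + (l : ℝ[X]) * RNm 2 0 (bkl k (l - 1)),
        RNm 2 0 (bkl k l) + (l : ℝ[X]) * RNm 2 1 (bkl k (l - 1))]]) *
    (Matrix.of ![![RNm 2 0 a, RNm 2 1 a], ![X * RNm 2 1 a, RNm 2 0 a]])


noncomputable def gg (l j : ℕ) : ℝ := ∏ t ∈ Finset.range l, ((2 * j : ℝ) - (t : ℝ))

noncomputable def SS (k l : ℕ) : ℝ :=
  ∑ j ∈ Finset.range (k + 1), (-1 : ℝ) ^ j * (k.choose j : ℝ) * gg l j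

noncomputable def TT (k l : ℕ) : ℝ :=
  ∑ i ∈ Finset.range (k + 1), (-1 : ℝ) ^ i * (k.choose i : ℝ) * gg l (i + 1)

lemma gg_succ (l j : ℕ) : gg (l + 1) j = gg l j * ((2 * j : ℝ) - (l : ℝ)) := by
  simp [gg, Finset.prod_range_succ]

lemma gg_zero {l j : ℕ} (h : 2 * j < l) : gg l j = 0 := by
  refine Finset.prod_eq_zero (Finset.mem_range.2 h) ?_
  push_cast; ring

lemma SS_pascal (k l : ℕ) : SS (k + 1) l = SS k l - TT k l := by
  have h1 : SS (k + 1) l =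
      (∑ i ∈ Finset.range (k + 1), (-1 : ℝ) ^ (i+1) * ((k+1).choose (i+1) : ℝ) * gg l (i+1))
        + (-1 : ℝ) ^ 0 * ((k+1).choose 0 : ℝ) * gg l 0 :=
    Finset.sum_range_succ' _ _
  have h2 : ∀ i, (-1 : ℝ) ^ (i+1) * ((k+1).choose (i+1) : ℝ) * gg l (i+1)
      = (-1 : ℝ) ^ (i+1) * (k.choose (i+1) : ℝ) * gg l (i+1)
        - (-1 : ℝ) ^ i * (k.choose i : ℝ) * gg l (i+1) := by
    intro i
    rw [Nat.choose_succ_succ]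
    push_cast
    ring
  rw [h1]
  simp only [h2]
  rw [Finset.sum_sub_distrib]
  have h3 : (∑ i ∈ Finset.range (k + 1), (-1 : ℝ) ^ (i+1) * (k.choose (i+1) : ℝ) * gg l (i+1))
      + (-1 : ℝ) ^ 0 * ((k+1).choose 0 : ℝ) * gg l 0 = SS k l := by
    rw [Finset.sum_range_succ]
    simp only [Nat.choose_succ_self, Nat.cast_zero, mul_zero, zero_mul, mul_one, add_zero]
    rw [SS, Finset.sum_range_succ' (fun j => (-1 : ℝ) ^ j * (k.choose j : ℝ) * gg l j) k]
    simp
  rw [TT]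
  linarith [h3]

lemma SS_rec (k l : ℕ) :
    SS (k + 1) (l + 1) = (2 * (k + 1) - (l : ℝ)) * SS (k + 1) l - 2 * (k + 1) * SS k l := by
  have e1 : SS (k + 1) (l + 1) =
      2 * (∑ j ∈ Finset.range (k + 2), (-1 : ℝ) ^ j * ((k+1).choose j : ℝ) * (j : ℝ) * gg l j)
        - (l : ℝ) * SS (k + 1) l := by
    rw [SS, SS, Finset.mul_sum, Finset.mul_sum, ← Finset.sum_sub_distrib]
    refine Finset.sum_congr rfl fun j _ => by rw [gg_succ]; ring
  have e2 : (∑ j ∈ Finset.range (k + 2), (-1 : ℝ) ^ j * ((k+1).choose j : ℝ) * (j : ℝ) * gg l j)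
      = -((k : ℝ) + 1) * TT k l := by
    rw [Finset.sum_range_succ' (fun j => (-1 : ℝ) ^ j * ((k+1).choose j : ℝ) * (j : ℝ) * gg l j) (k+1)]
    have h2 : ∀ i, (-1 : ℝ) ^ (i+1) * ((k+1).choose (i+1) : ℝ) * ((i+1 : ℕ) : ℝ) * gg l (i+1)
        = -(((k : ℝ) + 1) * ((-1 : ℝ) ^ i * (k.choose i : ℝ) * gg l (i+1))) := by
      intro i
      have hc : ((k+1).choose (i+1) : ℝ) * ((i+1 : ℕ) : ℝ) = ((k:ℝ)+1) * (k.choose i : ℝ) := by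
        have h := (Nat.add_one_mul_choose_eq k i).symm
        have h2 : ((k+1).choose (i+1)) * (i+1) = (k+1) * k.choose i := by
          simpa [Nat.succ_eq_add_one, mul_comm] using h
        exact_mod_cast congrArg (Nat.cast : ℕ → ℝ) h2
      push_cast at hc ⊢
      calc (-1 : ℝ) ^ (i+1) * (((k+1).choose (i+1) : ℝ)) * ((i:ℝ)+1) * gg l (i+1)
          = (-1 : ℝ) ^ (i+1) * ((((k+1).choose (i+1) : ℝ)) * ((i:ℝ)+1)) * gg l (i+1) := by ring
        _ = (-1 : ℝ) ^ (i+1) * (((k:ℝ)+1) * (k.choose i : ℝ)) * gg l (i+1) := by rw [hc]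
        _ = -(((k : ℝ) + 1) * ((-1 : ℝ) ^ i * (k.choose i : ℝ) * gg l (i+1))) := by ring
    simp only [h2]
    rw [Finset.sum_neg_distrib]
    rw [← Finset.mul_sum]
    rw [TT]
    push_cast
    ring
  rw [e1, e2]
  have := SS_pascal k l
  push_cast
  nlinarith [this]

noncomputable def bet (k l : ℕ) : ℝ := ((-1 : ℝ) ^ k / (k.factorial : ℝ)) * SS k l

lemma bet_rec (k l : ℕ) :
    bet (k + 1) (l + 1) = (2 * ((k : ℝ) + 1) - (l : ℝ)) * bet (k + 1) l + 2 * bet k l := by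
  have hk : (k.factorial : ℝ) ≠ 0 := by exact_mod_cast k.factorial_ne_zero
  have hk1 : ((k+1).factorial : ℝ) ≠ 0 := by exact_mod_cast (k+1).factorial_ne_zero
  have hf : ((k+1).factorial : ℝ) = ((k : ℝ) + 1) * (k.factorial : ℝ) := by
    rw [Nat.factorial_succ]; push_cast; ring
  unfold bet
  rw [SS_rec, hf]
  have : ((-1 : ℝ) ^ (k+1)) = -((-1:ℝ)^k) := by ring
  rw [this]
  field_simp
  ring

lemma bet_high {k l : ℕ} (h : 2 * k < l) : bet k l = 0 := by
  unfold bet SS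
  rw [Finset.sum_eq_zero, mul_zero]
  intro j hj
  rw [gg_zero (by simp at hj; omega), mul_zero]

lemma bet_low : ∀ l k : ℕ, l < k → bet k l = 0 := by
  intro l
  induction l with
  | zero =>
    intro k hk
    have hg : ∀ j, gg 0 j = 1 := fun j => by simp [gg]
    have h : SS k 0 = 0 := by
      unfold SS
      simp only [hg, mul_one]
      have := Int.alternating_sum_range_choose_of_ne (show k ≠ 0 by omega)
      calc (∑ j ∈ Finset.range (k+1), (-1:ℝ)^j * (k.choose j : ℝ))
          = ((∑ j ∈ Finset.range (k+1), (-1:ℤ)^j * (k.choose j : ℤ) : ℤ) : ℝ) := by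
            push_cast; rfl
        _ = 0 := by rw [this]; simp
    unfold bet; rw [h, mul_zero]
  | succ l ih =>
    intro k hk
    obtain ⟨k', rfl⟩ : ∃ k', k = k' + 1 := ⟨k - 1, by omega⟩
    rw [bet_rec, ih k' (by omega), ih (k'+1) (by omega)]
    ring

lemma bkl_eq (k l : ℕ) :
    bkl k l = if k ≤ l then C (bet k l) * X ^ (2 * k - l) else 0 := by
  unfold bkl
  by_cases h1 : (l + 1) / 2 ≤ k ∧ k ≤ l
  · rw [if_pos h1, if_pos h1.2]
    have hsum : (∑ j ∈ Finset.Icc ((l + 1) / 2) k,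
          (-1 : ℝ) ^ j * (k.choose j : ℝ) * ∏ t ∈ Finset.range l, ((2 * j : ℝ) - (t : ℝ)))
        = SS k l := by
      unfold SS gg
      refine Finset.sum_subset ?_ ?_
      · intro j hj
        simp only [Finset.mem_Icc] at hj
        exact Finset.mem_range.2 (by omega)
      · intro j hj hj2
        simp only [Finset.mem_range] at hj
        simp only [Finset.mem_Icc, not_and, not_le] at hj2
        have hjb : j < (l + 1) / 2 := by
          by_contra hc
          push_neg at hc
          exact absurd (hj2 hc) (by omega)
        have hjlt : 2 * j < l := by omega
        rw [show (∏ t ∈ Finset.range l, ((2 * j : ℝ) - (t : ℝ))) = gg l j from rfl,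
          gg_zero hjlt, mul_zero]
    rw [hsum]; rfl
  · rw [if_neg h1]
    by_cases h2 : k ≤ l
    · rw [if_pos h2]
      have : 2 * k < l := by
        have : ¬ (l + 1) / 2 ≤ k := fun h => h1 ⟨h, h2⟩
        omega
      rw [bet_high this, map_zero, zero_mul]
    · rw [if_neg h2]

lemma brec0 (l : ℕ) : bkl 0 (l + 1) = derivative (bkl 0 l) := by
  rw [bkl_eq, bkl_eq, if_pos (Nat.zero_le _), if_pos (Nat.zero_le _)]
  rw [show bet 0 (l+1) = 0 from bet_high (by omega)]
  simp [derivative_C_mul]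

lemma bkl_gt {k l : ℕ} (h : l < k) : bkl k l = 0 := by
  rw [bkl_eq, if_neg (by omega)]

lemma brecS (k l : ℕ) :
    bkl (k + 1) (l + 1) = derivative (bkl (k + 1) l) + 2 * X * bkl k l := by
  by_cases hkl : k ≤ l
  · rw [bkl_eq, bkl_eq, bkl_eq, if_pos (by omega), if_pos hkl]
    by_cases hk1 : k + 1 ≤ l
    · rw [if_pos hk1]
      by_cases hc : l ≤ 2 * k + 1
      · -- all exponents manageable
        have he1 : 2 * (k + 1) - (l + 1) = 2 * k + 1 - l := by omega
        have he2 : 2 * (k + 1) - l = (2 * k + 1 - l) + 1 := by omega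
        rw [he1, he2, derivative_C_mul, derivative_X_pow, Nat.add_sub_cancel]
        rw [bet_rec]
        by_cases hc2 : l ≤ 2 * k
        · have hcast : (((2 * k + 1 - l) + 1 : ℕ) : ℝ) = 2 * ((k : ℝ) + 1) - (l : ℝ) := by
            push_cast [Nat.cast_sub (show l ≤ 2 * k + 1 by omega)]
            ring
          have hx : 2 * k - l + 1 = 2 * k + 1 - l := by omega
          rw [map_add, map_mul, map_mul, hcast]
          rw [show (2:ℝ[X]) * X * (C (bet k l) * X ^ (2*k-l))
              = C (2:ℝ) * C (bet k l) * (X ^ (2*k-l) * X) by simp [map_ofNat]; ring]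
          rw [← pow_succ, hx]
          ring
        · -- l = 2k+1
          have hl : l = 2 * k + 1 := by omega
          subst hl
          have h1 : (2 * ((k:ℝ) + 1) - ((2*k+1 : ℕ) : ℝ)) = 1 := by push_cast; ring
          rw [bet_high (show 2*k < 2*k+1 by omega), h1,
            show 2*k+1 - (2*k+1) = 0 from by omega, show 2*k - (2*k+1) = 0 from by omega]
          simp
      · -- l ≥ 2k+2 : everything vanishes
        have h1 : bet (k+1) (l+1) = 0 := bet_high (by omega)
        have h3 : bet k l = 0 := bet_high (by omega)
        rw [h1, h3]
        by_cases hl2 : l = 2 * (k + 1)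
        · rw [hl2]
          simp [derivative_C_mul]
        · rw [bet_high (show 2*(k+1) < l by omega)]
          simp
    · -- k = l
      have hk : k = l := by omega
      subst hk
      rw [if_neg (show ¬ (k + 1 ≤ k) by omega), bet_rec,
        bet_low k (k+1) (show k < k + 1 by omega)]
      rw [show 2 * (k+1) - (k+1) = k + 1 by omega, show 2 * k - k = k by omega]
      rw [derivative_zero, zero_add, mul_zero, zero_add, map_mul]
      simp only [map_ofNat]
      ring
  · rw [bkl_gt (by omega : l + 1 < k + 1), bkl_gt (by omega : l < k + 1), bkl_gt (by omega : l < k)]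
    simp

lemma bkl_zero_zero : bkl 0 0 = 1 := by
  unfold bkl
  norm_num

lemma A1 (u : ℝ[X]) (l : ℕ) :
    derivative^[l] (expand ℝ 2 u) =
      ∑ k ∈ Finset.range (l + 1), bkl k l * expand ℝ 2 (derivative^[k] u) := by
  induction l with
  | zero => simp [bkl_zero_zero]
  | succ l ih =>
    have hterm : ∀ k, derivative (bkl k l * expand ℝ 2 (derivative^[k] u))
        = derivative (bkl k l) * expand ℝ 2 (derivative^[k] u)
          + 2 * X * bkl k l * expand ℝ 2 (derivative^[k+1] u) := by
      intro k
      rw [derivative_mul]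
      have h2 : derivative (expand ℝ 2 (derivative^[k] u))
          = expand ℝ 2 (derivative^[k+1] u) * (2 * X) := by
        rw [derivative_expand, Function.iterate_succ_apply']
        norm_num
      rw [h2]; ring
    rw [Function.iterate_succ_apply', ih, derivative_sum]
    simp only [hterm]
    rw [Finset.sum_add_distrib]
    rw [Finset.sum_range_succ' (fun k => derivative (bkl k l) * expand ℝ 2 (derivative^[k] u)) l]
    rw [Finset.sum_range_succ (fun k => 2 * X * bkl k l * expand ℝ 2 (derivative^[k+1] u)) l]
    rw [Finset.sum_range_succ' (fun k => bkl k (l+1) * expand ℝ 2 (derivative^[k] u)) (l+1)]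
    simp only [brecS, brec0]
    rw [Finset.sum_range_succ
      (fun i => (derivative (bkl (i+1) l) + 2 * X * bkl i l) * expand ℝ 2 (derivative^[i+1] u)) l]
    rw [bkl_gt (show l < l + 1 by omega), derivative_zero, zero_add]
    simp only [add_mul]
    rw [Finset.sum_add_distrib]
    ring

lemma A2 (q : ℝ[X]) (l : ℕ) :
    derivative^[l + 1] (X * q) =
      X * derivative^[l + 1] q + ((l : ℝ[X]) + 1) * derivative^[l] q := by
  induction l with
  | zero => simp [derivative_mul]; ring
  | succ l ih =>
    rw [Function.iterate_succ_apply', ih, derivative_add, derivative_mul, derivative_mul,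
      derivative_X,
      show derivative (derivative^[l+1] q) = derivative^[l+1+1] q from
        (Function.iterate_succ_apply' _ _ _).symm,
      show derivative (derivative^[l] q) = derivative^[l+1] q from
        (Function.iterate_succ_apply' _ _ _).symm]
    have : derivative ((l : ℝ[X]) + 1) = 0 := by
      simp
    rw [this]
    push_cast
    ring

lemma coeff_RNm (m : ℕ) (p : ℝ[X]) (n : ℕ) :
    (RNm 2 m p).coeff n = p.coeff (n * 2 + m) := by
  unfold RNm
  rw [finset_sum_coeff]
  simp_rw [coeff_C_mul, coeff_X_pow, mul_ite, mul_one, mul_zero]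
  rw [Finset.sum_ite_eq (Finset.range (p.natDegree + 1)) n
    (fun k => p.coeff (k * 2 + m))]
  split_ifs with h
  · rfl
  · symm
    apply coeff_eq_zero_of_natDegree_lt
    simp only [Finset.mem_range, not_lt] at h
    omega

lemma reconstruct (q : ℝ[X]) :
    expand ℝ 2 (RNm 2 0 q) + X * expand ℝ 2 (RNm 2 1 q) = q := by
  ext n
  rw [coeff_add]
  rcases Nat.even_or_odd n with he | ho
  · obtain ⟨c, hc⟩ := he
    have hn : n = 2 * c := by omega
    subst hn
    rw [coeff_expand (by norm_num), if_pos ⟨c, rfl⟩]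
    have h2 : (X * expand ℝ 2 (RNm 2 1 q)).coeff (2 * c) = 0 := by
      rcases Nat.eq_zero_or_pos c with rfl | hc
      · simp
      · rw [show 2 * c = (2 * c - 1) + 1 by omega, coeff_X_mul,
          coeff_expand (by norm_num), if_neg (by omega)]
    rw [h2, add_zero, coeff_RNm]
    congr 1
    omega
  · obtain ⟨c, hc⟩ := ho
    subst hc
    rw [coeff_expand (by norm_num), if_neg (by omega)]
    rw [show 2 * c + 1 = (2 * c) + 1 from rfl, coeff_X_mul,
      coeff_expand (by norm_num), if_pos ⟨c, by ring⟩, coeff_RNm]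
    rw [zero_add]
    congr 1
    omega

lemma RNm_eq0 (u v : ℝ[X]) :
    RNm 2 0 (expand ℝ 2 u + X * expand ℝ 2 v) = u := by
  ext n
  rw [coeff_RNm, coeff_add, coeff_expand (by norm_num), if_pos ⟨n, by ring⟩]
  have h2 : (X * expand ℝ 2 v).coeff (n * 2 + 0) = 0 := by
    rcases Nat.eq_zero_or_pos n with rfl | hn
    · simp
    · rw [show n * 2 + 0 = (n * 2 - 1) + 1 by omega, coeff_X_mul,
        coeff_expand (by norm_num), if_neg (by omega)]
  rw [h2, add_zero]
  congr 1
  omega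

lemma RNm_eq1 (u v : ℝ[X]) :
    RNm 2 1 (expand ℝ 2 u + X * expand ℝ 2 v) = v := by
  ext n
  rw [coeff_RNm, coeff_add, coeff_expand (by norm_num), if_neg (by omega)]
  rw [show n * 2 + 1 = (n * 2) + 1 from rfl, coeff_X_mul,
    coeff_expand (by norm_num), if_pos ⟨n, by ring⟩, zero_add]
  congr 1
  omega

lemma iter_add (q r : ℝ[X]) (n : ℕ) :
    derivative^[n] (q + r) = derivative^[n] q + derivative^[n] r := by
  induction n generalizing q r with
  | zero => simp
  | succ n ih => rw [Function.iterate_succ_apply, Function.iterate_succ_apply,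
      Function.iterate_succ_apply, derivative_add, ih]

lemma key (p : ℝ[X]) (l : ℕ) :
    derivative^[l] p =
      ∑ k ∈ Finset.range (l + 1),
        (bkl k l * expand ℝ 2 (derivative^[k] (RNm 2 0 p))
          + (X * bkl k l + (l : ℝ[X]) * bkl k (l - 1)) *
              expand ℝ 2 (derivative^[k] (RNm 2 1 p))) := by
  have hp := reconstruct p
  rcases l with _ | l
  · simp only [zero_add, Function.iterate_zero_apply, Finset.sum_range_one, bkl_zero_zero,
      Nat.cast_zero]
    linear_combination -hp
  · simp only [Nat.add_sub_cancel]
    conv_lhs => rw [← hp]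
    rw [iter_add, A1 (RNm 2 0 p) (l+1), A2 (expand ℝ 2 (RNm 2 1 p)) l,
      A1 (RNm 2 1 p) (l+1), A1 (RNm 2 1 p) l]
    have hgoal : ∀ k, bkl k (l+1) * expand ℝ 2 (derivative^[k] (RNm 2 0 p))
          + (X * bkl k (l+1) + ((l+1 : ℕ) : ℝ[X]) * bkl k l) *
              expand ℝ 2 (derivative^[k] (RNm 2 1 p))
        = bkl k (l+1) * expand ℝ 2 (derivative^[k] (RNm 2 0 p))
          + (X * (bkl k (l+1) * expand ℝ 2 (derivative^[k] (RNm 2 1 p)))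
            + ((l : ℝ[X]) + 1) * (bkl k l * expand ℝ 2 (derivative^[k] (RNm 2 1 p)))) := by
      intro k
      push_cast
      ring
    simp only [hgoal]
    rw [Finset.sum_add_distrib, Finset.sum_add_distrib, ← Finset.mul_sum, ← Finset.mul_sum]
    rw [Finset.sum_range_succ
      (fun k => bkl k l * expand ℝ 2 (derivative^[k] (RNm 2 1 p))) (l+1)]
    rw [bkl_gt (show l < l + 1 by omega), zero_mul, add_zero]

lemma central (p a : ℝ[X]) (l : ℕ) :
    a * derivative^[l] p =
      expand ℝ 2 (∑ k ∈ Finset.range (l + 1),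
        (derivative^[k] (RNm 2 0 p) *
            (RNm 2 0 (bkl k l) * RNm 2 0 a + RNm 2 1 (bkl k l) * (X * RNm 2 1 a))
          + derivative^[k] (RNm 2 1 p) *
            ((X * RNm 2 1 (bkl k l) + (l : ℝ[X]) * RNm 2 0 (bkl k (l-1))) * RNm 2 0 a
              + (RNm 2 0 (bkl k l) + (l : ℝ[X]) * RNm 2 1 (bkl k (l-1))) * (X * RNm 2 1 a))))
      + X * expand ℝ 2 (∑ k ∈ Finset.range (l + 1),
        (derivative^[k] (RNm 2 0 p) *
            (RNm 2 0 (bkl k l) * RNm 2 1 a + RNm 2 1 (bkl k l) * RNm 2 0 a)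
          + derivative^[k] (RNm 2 1 p) *
            ((X * RNm 2 1 (bkl k l) + (l : ℝ[X]) * RNm 2 0 (bkl k (l-1))) * RNm 2 1 a
              + (RNm 2 0 (bkl k l) + (l : ℝ[X]) * RNm 2 1 (bkl k (l-1))) * RNm 2 0 a))) := by
  rw [key p l, Finset.mul_sum, map_sum, map_sum, Finset.mul_sum, ← Finset.sum_add_distrib]
  refine Finset.sum_congr rfl fun k _ => ?_
  have ha := reconstruct a
  have hb := reconstruct (bkl k l)
  have hc := reconstruct (bkl k (l - 1))
  set a0 := RNm 2 0 a with ha0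
  set a1 := RNm 2 1 a with ha1
  set b0 := RNm 2 0 (bkl k l) with hb0
  set b1 := RNm 2 1 (bkl k l) with hb1
  set c0 := RNm 2 0 (bkl k (l-1)) with hc0
  set c1 := RNm 2 1 (bkl k (l-1)) with hc1
  rw [← ha, ← hb, ← hc]
  simp only [map_add, map_mul, map_natCast, expand_X]
  ring

theorem stmt6 (p a : ℝ[X]) (l : ℕ) :
    (Matrix.of ![![RNm 2 0 (a * derivative^[l] p), RNm 2 1 (a * derivative^[l] p)]] :
        Matrix (Fin 1) (Fin 2) ℝ[X]) =
      ∑ k ∈ Finset.range (l + 1),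
        (Matrix.of ![![derivative^[k] (RNm 2 0 p), derivative^[k] (RNm 2 1 p)]] :
            Matrix (Fin 1) (Fin 2) ℝ[X]) * Ckl k l a := by
  have h0 : RNm 2 0 (a * derivative^[l] p) =
      ∑ k ∈ Finset.range (l + 1),
        (derivative^[k] (RNm 2 0 p) *
            (RNm 2 0 (bkl k l) * RNm 2 0 a + RNm 2 1 (bkl k l) * (X * RNm 2 1 a))
          + derivative^[k] (RNm 2 1 p) *
            ((X * RNm 2 1 (bkl k l) + (l : ℝ[X]) * RNm 2 0 (bkl k (l-1))) * RNm 2 0 a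
              + (RNm 2 0 (bkl k l) + (l : ℝ[X]) * RNm 2 1 (bkl k (l-1))) * (X * RNm 2 1 a))) := by
    rw [central p a l]; exact RNm_eq0 _ _
  have h1 : RNm 2 1 (a * derivative^[l] p) =
      ∑ k ∈ Finset.range (l + 1),
        (derivative^[k] (RNm 2 0 p) *
            (RNm 2 0 (bkl k l) * RNm 2 1 a + RNm 2 1 (bkl k l) * RNm 2 0 a)
          + derivative^[k] (RNm 2 1 p) *
            ((X * RNm 2 1 (bkl k l) + (l : ℝ[X]) * RNm 2 0 (bkl k (l-1))) * RNm 2 1 a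
              + (RNm 2 0 (bkl k l) + (l : ℝ[X]) * RNm 2 1 (bkl k (l-1))) * RNm 2 0 a)) := by
    rw [central p a l]; exact RNm_eq1 _ _
  ext i j
  fin_cases i
  fin_cases j
  · simp only [Finset.sum_apply, Matrix.sum_apply, Matrix.mul_apply, Fin.sum_univ_two, Ckl,
      Matrix.of_apply, Matrix.cons_val', Matrix.cons_val_zero, Matrix.cons_val_one,
      Matrix.head_cons, Matrix.empty_val', Matrix.cons_val_fin_one, Matrix.head_fin_const,
      Fin.isValue, Fin.zero_eta]
    rw [h0]
  · simp only [Finset.sum_apply, Matrix.sum_apply, Matrix.mul_apply, Fin.sum_univ_two, Ckl,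
      Matrix.of_apply, Matrix.cons_val', Matrix.cons_val_zero, Matrix.cons_val_one,
      Matrix.head_cons, Matrix.empty_val', Matrix.cons_val_fin_one, Matrix.head_fin_const,
      Fin.isValue, Fin.mk_one]
    rw [h1]
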